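/- For fixed x, the set {f(x,a)·a : a ∈ S¹} of attainable ground velocities is exactly the circle of radius v̄ centered at w(x); in particular its convex hull is the closed disk of radius v̄ around w(x), and the gauge G(p) = max_{a∈S¹} pᵀa f(x,a) equals pᵀw(x) + v̄‖p‖. -/
import Mathlib


open scoped RealInnerProductSpace

/-- Ground speed `f(x,a)` for a wind value `wx`. -/
noncomputable def groundSpeed (v : ℝ) (wx a : EuclideanSpace ℝ (Fin 2)) : ℝ :=
  Real.sqrt (v ^ 2 - ‖wx‖ ^ 2 + ⟪wx, a⟫ ^ 2) + ⟪wx, a⟫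

local notation "E" => EuclideanSpace ℝ (Fin 2)

/-- The gauge `G(p) = max_{a ∈ S¹} pᵀa f(x,a)`. -/
noncomputable def gauge' (v : ℝ) (wx p : EuclideanSpace ℝ (Fin 2)) : ℝ :=
  sSup ((fun a : EuclideanSpace ℝ (Fin 2) => ⟪p, a⟫ * groundSpeed v wx a) ''
      Metric.sphere (0 : EuclideanSpace ℝ (Fin 2)) 1)

lemma groundSpeed_sphere (v : ℝ) (hv : 0 < v) (wx : E) (hw : ‖wx‖ < v)
    (a : E) (ha : ‖a‖ = 1) : ‖groundSpeed v wx a • a - wx‖ = v := by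
  have hrad : (0:ℝ) ≤ v ^ 2 - ‖wx‖ ^ 2 + ⟪wx, a⟫ ^ 2 := by
    nlinarith [norm_nonneg wx, sq_nonneg (⟪wx, a⟫ : ℝ)]
  have hs : Real.sqrt (v ^ 2 - ‖wx‖ ^ 2 + ⟪wx, a⟫ ^ 2) ^ 2
      = v ^ 2 - ‖wx‖ ^ 2 + ⟪wx, a⟫ ^ 2 := Real.sq_sqrt hrad
  have hcalc : ‖groundSpeed v wx a • a - wx‖ ^ 2 = v ^ 2 := by
    rw [norm_sub_sq_real, norm_smul, real_inner_smul_left, real_inner_comm wx a]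
    simp only [ha, mul_one, Real.norm_eq_abs, sq_abs]
    rw [groundSpeed]
    nlinarith [hs]
  rw [← Real.sqrt_sq (norm_nonneg _), hcalc, Real.sqrt_sq hv.le]

lemma groundSpeed_surj (v : ℝ) (hv : 0 < v) (wx : E) (hw : ‖wx‖ < v)
    (y : E) (hy : ‖y - wx‖ = v) :
    ∃ a : E, ‖a‖ = 1 ∧ groundSpeed v wx a • a = y := by
  have hyn : 0 < ‖y‖ := by
    rcases eq_or_lt_of_le (norm_nonneg y) with h | h
    · exfalso
      have : y = 0 := by simpa using h.symm
      rw [this] at hy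
      simp only [zero_sub, norm_neg] at hy
      linarith
    · exact h
  refine ⟨‖y‖⁻¹ • y, ?_, ?_⟩
  · rw [norm_smul]
    simp [abs_of_pos (inv_pos.mpr hyn), inv_mul_cancel₀ hyn.ne']
  · have hta : ⟪wx, ‖y‖⁻¹ • y⟫ = ‖y‖⁻¹ * ⟪wx, y⟫ := real_inner_smul_right _ _ _
    have hc1 : ⟪wx, y⟫ ≤ ‖wx‖ * ‖y‖ := real_inner_le_norm _ _
    have hsq : ‖y‖ ^ 2 - 2 * ⟪y, wx⟫ + ‖wx‖ ^ 2 = v ^ 2 := by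
      rw [← norm_sub_sq_real, hy]
    rw [real_inner_comm] at hsq
    have hclt : ⟪wx, y⟫ < ‖y‖ ^ 2 := by
      nlinarith [norm_nonneg wx, norm_nonneg y]
    have hnc : ‖y‖⁻¹ * ⟪wx, y⟫ < ‖y‖ := by
      rw [inv_mul_lt_iff₀ hyn, ← sq]
      exact hclt
    have hn1 : ‖y‖⁻¹ * ‖y‖ = 1 := inv_mul_cancel₀ hyn.ne'
    have hkey2 : (‖y‖ - ‖y‖⁻¹ * ⟪wx, y⟫) ^ 2
        = v ^ 2 - ‖wx‖ ^ 2 + (‖y‖⁻¹ * ⟪wx, y⟫) ^ 2 := by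
      have hexp : (‖y‖ - ‖y‖⁻¹ * ⟪wx, y⟫) ^ 2
          = ‖y‖ ^ 2 - 2 * ⟪wx, y⟫ * (‖y‖⁻¹ * ‖y‖) + (‖y‖⁻¹ * ⟪wx, y⟫) ^ 2 := by
        ring
      rw [hexp, hn1]
      nlinarith
    have hf : groundSpeed v wx (‖y‖⁻¹ • y) = ‖y‖ := by
      rw [groundSpeed, hta, ← hkey2, Real.sqrt_sq (by linarith)]
      ring
    rw [hf, smul_smul, mul_inv_cancel₀ hyn.ne', one_smul]

lemma exists_unit_orth (u : E) : ∃ e : E, ‖e‖ = 1 ∧ ⟪e, u⟫ = 0 := by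
  by_cases hu : u = 0
  · exact ⟨EuclideanSpace.single 0 1, by simp, by simp [hu]⟩
  · have hun : 0 < ‖u‖ := norm_pos_iff.mpr hu
    set u' : E := (WithLp.equiv 2 (Fin 2 → ℝ)).symm ![-u 1, u 0] with hu'
    have hnorm : ‖u'‖ = ‖u‖ := by
      rw [EuclideanSpace.norm_eq, EuclideanSpace.norm_eq]
      congr 1
      rw [Fin.sum_univ_two, Fin.sum_univ_two]
      simp [hu']
      ring
    have hinner : ⟪u', u⟫ = 0 := by
      rw [PiLp.inner_apply, Fin.sum_univ_two]
      simp [hu']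
      ring
    refine ⟨‖u‖⁻¹ • u', ?_, ?_⟩
    · rw [norm_smul, hnorm]
      simp [abs_of_pos (inv_pos.mpr hun), inv_mul_cancel₀ hun.ne']
    · rw [real_inner_smul_left, hinner, mul_zero]

/-- the attainable ground velocities `{f(x,a)•a : a ∈ S¹}` form exactly the
circle of radius `v̄` centred at `w x`; their convex hull is the corresponding closed disk;
and `G(p) = pᵀw(x) + v̄‖p‖`. -/
theorem velocity_set_is_circle
    (v : ℝ) (hv : 0 < v)
    (wx : EuclideanSpace ℝ (Fin 2)) (hw : ‖wx‖ < v) :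
    ((fun a : EuclideanSpace ℝ (Fin 2) => groundSpeed v wx a • a) ''
        Metric.sphere (0 : EuclideanSpace ℝ (Fin 2)) 1 = Metric.sphere wx v) ∧
    (convexHull ℝ ((fun a : EuclideanSpace ℝ (Fin 2) => groundSpeed v wx a • a) ''
        Metric.sphere (0 : EuclideanSpace ℝ (Fin 2)) 1) = Metric.closedBall wx v) ∧
    (∀ p : EuclideanSpace ℝ (Fin 2), gauge' v wx p = ⟪p, wx⟫ + v * ‖p‖) := by
  have hcircle : (fun a : E => groundSpeed v wx a • a) ''
      Metric.sphere (0 : E) 1 = Metric.sphere wx v := by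
    ext y
    constructor
    · rintro ⟨a, ha, rfl⟩
      rw [Metric.mem_sphere, dist_eq_norm]
      exact groundSpeed_sphere v hv wx hw a (by simpa using ha)
    · intro hy
      rw [Metric.mem_sphere, dist_eq_norm] at hy
      obtain ⟨a, ha1, ha2⟩ := groundSpeed_surj v hv wx hw y hy
      exact ⟨a, by simpa using ha1, ha2⟩
  refine ⟨hcircle, ?_, ?_⟩
  · rw [hcircle]
    apply le_antisymm
    · exact convexHull_min Metric.sphere_subset_closedBall (convex_closedBall wx v)
    · intro y hy
      rw [Metric.mem_closedBall, dist_eq_norm] at hy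
      obtain ⟨e, he1, he2⟩ := exists_unit_orth (y - wx)
      set d := Real.sqrt (v ^ 2 - ‖y - wx‖ ^ 2) with hd
      have hrad : (0:ℝ) ≤ v ^ 2 - ‖y - wx‖ ^ 2 := by nlinarith [norm_nonneg (y - wx)]
      have hd2 : d ^ 2 = v ^ 2 - ‖y - wx‖ ^ 2 := Real.sq_sqrt hrad
      have hmem : ∀ s : ℝ, s ^ 2 = d ^ 2 → y + s • e ∈ Metric.sphere wx v := by
        intro s hs
        rw [Metric.mem_sphere, dist_eq_norm]
        have : y + s • e - wx = (y - wx) + s • e := by abel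
        rw [this]
        have hsq : ‖(y - wx) + s • e‖ ^ 2 = v ^ 2 := by
          rw [norm_add_sq_real, real_inner_smul_right, norm_smul, real_inner_comm, he2]
          simp only [he1, mul_one, mul_zero, Real.norm_eq_abs, sq_abs]
          nlinarith
        rw [← Real.sqrt_sq (norm_nonneg _), hsq, Real.sqrt_sq hv.le]
      have h1 : y + d • e ∈ Metric.sphere wx v := hmem d rfl
      have h2 : y + (-d) • e ∈ Metric.sphere wx v := hmem (-d) (by ring)
      have hmid : y = midpoint ℝ (y + d • e) (y + (-d) • e) := by
        rw [midpoint_eq_smul_add]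
        rw [show y + d • e + (y + (-d) • e) = (2:ℝ) • y by
          rw [neg_smul]; rw [two_smul]; abel]
        rw [smul_smul]
        norm_num
      rw [hmid]
      exact segment_subset_convexHull h1 h2 (midpoint_mem_segment _ _)
  · intro p
    have himg : (fun a : E => ⟪p, a⟫ * groundSpeed v wx a) '' Metric.sphere (0 : E) 1 =
        (fun y : E => ⟪p, y⟫) '' Metric.sphere wx v := by
      rw [← hcircle, Set.image_image]
      refine Set.image_congr' (fun a => ?_)
      rw [real_inner_smul_right]
      ring
    have hgr : IsGreatest ((fun y : E => ⟪p, y⟫) '' Metric.sphere wx v)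
        (⟪p, wx⟫ + v * ‖p‖) := by
      constructor
      · by_cases hp : p = 0
        · subst hp
          refine ⟨wx + v • EuclideanSpace.single 0 1, ?_, by simp⟩
          rw [Metric.mem_sphere, dist_eq_norm]
          simp [norm_smul, abs_of_pos hv]
        · have hpn : 0 < ‖p‖ := norm_pos_iff.mpr hp
          refine ⟨wx + (v * ‖p‖⁻¹) • p, ?_, ?_⟩
          · rw [Metric.mem_sphere, dist_eq_norm]
            rw [show wx + (v * ‖p‖⁻¹) • p - wx = (v * ‖p‖⁻¹) • p by abel]
            rw [norm_smul, Real.norm_eq_abs, abs_of_pos (by positivity)]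
            field_simp
          · simp only
            rw [inner_add_right, real_inner_smul_right, real_inner_self_eq_norm_sq]
            field_simp
      · rintro z ⟨y, hy, rfl⟩
        rw [Metric.mem_sphere, dist_eq_norm] at hy
        show ⟪p, y⟫ ≤ ⟪p, wx⟫ + v * ‖p‖
        have : ⟪p, y⟫ = ⟪p, wx⟫ + ⟪p, y - wx⟫ := by
          rw [← inner_add_right]; congr 1; abel
        rw [this]
        have hcs : ⟪p, y - wx⟫ ≤ ‖p‖ * ‖y - wx‖ := real_inner_le_norm _ _
        rw [hy] at hcs
        linarith
    rw [gauge', himg]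
    exact hgr.csSup_eq
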